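/- For every x ∈ ℝ^d with x ≠ 0 and every t > 0, the function s ↦ p_{σ,γ}(s,x) is differentiable at t with derivative p_{σ+1,γ}(t,x); that is, ∂_t p_{σ,γ}(t,x) = p_{σ+1,γ}(t,x). -/

import Mathlib

open Complex MeasureTheory Filter Asymptotics

/-- The Mellin-Barnes integrand factor
`𝓗_{σ,γ}(z) = Γ(d/2+γ+βz)·Γ(1+z)·Γ(-z) / (Γ(-γ-βz)·Γ(1-σ+αz))`.
Note that `Complex.Gamma` vanishes at the poles of the Gamma function, so division by it
realizes the entire reciprocal Gamma function. -/
noncomputable def HFun (d : ℕ) (α β γ σ : ℝ) (z : ℂ) : ℂ :=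
  Complex.Gamma ((d : ℂ) / 2 + (γ : ℂ) + (β : ℂ) * z) * Complex.Gamma (1 + z) *
      Complex.Gamma (-z) /
    (Complex.Gamma (-(γ : ℂ) - (β : ℂ) * z) * Complex.Gamma (1 - (σ : ℂ) + (α : ℂ) * z))

/-- The integrand `t ↦ 𝓗_{σ,γ}(ℓ+it)·r^{-(ℓ+it)}` of the Mellin-Barnes integral,
where `r^{-z} = exp(-z·ln r)`. -/
noncomputable def mellinKernel (d : ℕ) (α β γ σ ℓ r : ℝ) (t : ℝ) : ℂ :=
  HFun d α β γ σ ((ℓ : ℂ) + (t : ℂ) * Complex.I) *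
    Complex.exp (-((ℓ : ℂ) + (t : ℂ) * Complex.I) * (Real.log r : ℂ))

/-- The Mellin-Barnes integral `𝔥_{σ,γ}(r) = (1/(2π)) ∫_ℝ 𝓗_{σ,γ}(ℓ+it)·r^{-(ℓ+it)} dt`. -/
noncomputable def hFun (d : ℕ) (α β γ σ ℓ : ℝ) (r : ℝ) : ℂ :=
  ((1 / (2 * Real.pi) : ℝ) : ℂ) * ∫ t : ℝ, mellinKernel d α β γ σ ℓ r t

/-- `p_{σ,γ}(t,x) = 2^{2γ}·π^{-d/2}·|x|^{-d-2γ}·t^{-σ}·𝔥_{σ,γ}(2^{-2β}·|x|^{2β}·t^{-α})`. -/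
noncomputable def pFun (d : ℕ) (α β γ σ ℓ : ℝ) (t : ℝ) (x : EuclideanSpace ℝ (Fin d)) : ℂ :=
  (((2 : ℝ) ^ (2 * γ) * Real.pi ^ (-(d : ℝ) / 2) * ‖x‖ ^ (-(d : ℝ) - 2 * γ) *
      t ^ (-σ) : ℝ) : ℂ) *
    hFun d α β γ σ ℓ ((2 : ℝ) ^ (-(2 * β)) * ‖x‖ ^ (2 * β) * t ^ (-α))

open scoped Real ComplexConjugate

/-!
On the line `Re z = ℓ`, `s^{-σ} 𝔥_σ(c s^{-α}) = ∫ 𝓗_σ(z) c^{-z} s^{αz-σ} dt`. Differentiating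
`s^{αz-σ}` brings down the factor `αz - σ`, and `(αz - σ) 𝓗_σ = 𝓗_{σ+1}` by `Γ(w + 1) = w Γ(w)`
in the last reciprocal Gamma factor. Differentiation under the integral sign is justified by the
integrability of `𝓗_σ` along the line: `|Γ(a + is)| ≲ |s|^N e^{-π|s|/2}`, and by the reflection
formula `|1/Γ(a + is)| ≲ |s|^N e^{π|s|/2}`. Multiplying the five factors of `𝓗_σ(ℓ + it)`, the
exponentials leave `e^{-π(2-α)|t|/2}`, which beats every power of `|t|` exactly because `α < 2`.
The Gamma bound itself comes from `|Γ(1 + is)|² = πs / sinh(πs)`, moved to other abscissae by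
`Γ(w + 1) = w Γ(w)` and, between consecutive integers, by comparison through the Beta integral.
-/

lemma eventually_one_le_abs_cocompact : ∀ᶠ s : ℝ in cocompact ℝ, 1 ≤ |s| :=
  tendsto_norm_cocompact_atTop.eventually_ge_atTop 1

lemma isBigO_one_add_abs_pow_exp (k : ℕ) {ε : ℝ} (hε : 0 < ε) :
    (fun s : ℝ => (1 + |s|) ^ k) =O[cocompact ℝ] fun s => Real.exp (ε * |s|) := by
  have h := (isLittleO_pow_exp_pos_mul_atTop k hε).isBigO.comp_tendsto
    (tendsto_atTop_add_const_left _ 1 (tendsto_norm_cocompact_atTop (E := ℝ)))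
  refine (h.congr_right fun s => ?_).trans ((isBigO_refl _ _).const_mul_left (Real.exp ε))
  simp [mul_add, Real.exp_add]

lemma integrable_exp_mul_abs {c : ℝ} (hc : c < 0) : Integrable fun t : ℝ => Real.exp (c * |t|) := by
  rw [← integrableOn_univ, ← Set.Iic_union_Ioi (a := 0)]
  refine IntegrableOn.union ?_ ?_
  · exact (integrableOn_exp_mul_Iic (neg_pos.mpr hc) 0).congr_fun
      (fun t ht => by simp [abs_of_nonpos (Set.mem_Iic.mp ht)]) measurableSet_Iic
  · exact (integrableOn_exp_mul_Ioi hc 0).congr_fun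
      (fun t ht => by simp [abs_of_pos (Set.mem_Ioi.mp ht)]) measurableSet_Ioi

namespace Complex

lemma Gamma_add_nat_succ {w : ℂ} (hw : w.im ≠ 0) (k : ℕ) :
    Gamma (w + (k + 1 : ℕ)) = (w + k) * Gamma (w + k) := by
  have hk : w + k ≠ 0 := fun h => hw (by simpa using congrArg im h)
  rw [← Gamma_add_one _ hk]
  push_cast
  ring_nf

lemma norm_Gamma_le_norm_Gamma_add_nat {w : ℂ} (hw : 1 ≤ |w.im|) (n : ℕ) :
    ‖Gamma w‖ ≤ ‖Gamma (w + n)‖ := by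
  induction n with
  | zero => simp
  | succ k ih =>
    have hk : 1 ≤ ‖w + k‖ := hw.trans (by simpa using abs_im_le_norm (w + k))
    rw [Gamma_add_nat_succ (abs_pos.mp (by linarith)) k, norm_mul]
    exact ih.trans (le_mul_of_one_le_left (norm_nonneg _) hk)

lemma norm_Gamma_add_nat_le {w : ℂ} (hw : w.im ≠ 0) (n : ℕ) :
    ‖Gamma (w + n)‖ ≤ (‖w‖ + n) ^ n * ‖Gamma w‖ := by
  induction n with
  | zero => simp
  | succ k ih =>
    have hk : ‖w + k‖ ≤ ‖w‖ + (k + 1 : ℕ) := by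
      refine (norm_add_le _ _).trans ?_
      simp
    rw [Gamma_add_nat_succ hw k, norm_mul]
    calc ‖w + k‖ * ‖Gamma (w + k)‖
        ≤ (‖w‖ + (k + 1 : ℕ)) * ((‖w‖ + k) ^ k * ‖Gamma w‖) := by gcongr
      _ ≤ (‖w‖ + (k + 1 : ℕ)) * ((‖w‖ + (k + 1 : ℕ)) ^ k * ‖Gamma w‖) := by
        gcongr
        linarith
      _ = (‖w‖ + (k + 1 : ℕ)) ^ (k + 1) * ‖Gamma w‖ := by ring

lemma exists_norm_Gamma_le_mul_norm_Gamma_add {a δ : ℝ} (ha : 0 < a) (hδ : 0 < δ) :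
    ∃ C : ℝ, ∀ s : ℝ, ‖Gamma (a + s * I)‖ ≤ C * ‖Gamma ((a + δ : ℝ) + s * I)‖ := by
  set B : ℝ := ∫ x in (0 : ℝ)..1, ‖(x : ℂ) ^ ((a : ℂ) - 1) * (1 - (x : ℂ)) ^ ((δ : ℂ) - 1)‖
  refine ⟨B / Real.Gamma δ, fun s => ?_⟩
  set u : ℂ := a + s * I
  have hu : 0 < u.re := by simpa [u] using ha
  -- the Beta integrand has the same modulus along the whole vertical line through `a`
  have hB : ‖betaIntegral u δ‖ ≤ B := by
    refine (intervalIntegral.norm_integral_le_integral_norm zero_le_one).trans_eq ?_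
    refine intervalIntegral.integral_congr_ae (ae_of_all _ fun x hx => ?_)
    rw [Set.uIoc_of_le zero_le_one] at hx
    simp only [norm_mul, norm_cpow_eq_rpow_re_of_pos hx.1]
    simp [u]
  have key := Gamma_mul_Gamma_eq_betaIntegral hu (by simpa using hδ : 0 < (δ : ℂ).re)
  rw [Gamma_ofReal] at key
  have hΓδ := Real.Gamma_pos_of_pos hδ
  have hnorm : ‖Gamma u‖ * Real.Gamma δ = ‖Gamma (u + δ)‖ * ‖betaIntegral u δ‖ := by
    simpa [abs_of_pos hΓδ] using congrArg norm key
  have hshift : u + δ = ((a + δ : ℝ) : ℂ) + s * I := by push_cast [u]; ring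
  rw [div_mul_eq_mul_div, le_div_iff₀ hΓδ, hnorm, ← hshift, mul_comm B]
  gcongr

lemma norm_Gamma_one_add_mul_I_sq {s : ℝ} (hs : s ≠ 0) :
    ‖Gamma (1 + s * I)‖ ^ 2 = π * s / Real.sinh (π * s) := by
  have hsI : (s : ℂ) * I ≠ 0 := by simpa using hs
  have hsinh : (Real.sinh (π * s) : ℂ) ≠ 0 := by
    exact_mod_cast Real.sinh_ne_zero.mpr (mul_ne_zero Real.pi_ne_zero hs)
  have hconj : conj (Gamma (1 + s * I)) = Gamma (1 - s * I) := by
    rw [← Gamma_conj]; simp [sub_eq_add_neg]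
  have hsin : sin (π * (s * I)) = Real.sinh (π * s) * I := by
    rw [← mul_assoc, sin_mul_I, ← ofReal_mul, ofReal_sinh]
  apply ofReal_injective
  rw [Complex.sq_norm, ← mul_conj, hconj, add_comm, Gamma_add_one _ hsI,
    mul_assoc, Gamma_mul_Gamma_one_sub, hsin, ofReal_div, ofReal_mul]
  field_simp

lemma norm_Gamma_one_add_mul_I_le {s : ℝ} (hs : 1 ≤ |s|) :
    ‖Gamma (1 + s * I)‖ ≤ 4 * (1 + |s|) * Real.exp (-(π / 2 * |s|)) := by
  set y := π * |s|
  have hy : 1 ≤ y := by nlinarith [Real.pi_gt_three]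
  have hsinh : Real.exp y / 4 ≤ Real.sinh y := by
    have := Real.add_one_le_exp y
    have := Real.exp_le_one_iff.mpr (by linarith : -y ≤ 0)
    rw [Real.sinh_eq]; linarith
  have hsq : ‖Gamma (1 + s * I)‖ ^ 2 ≤ 4 * y * Real.exp (-y) := by
    have heven : π * s / Real.sinh (π * s) = y / Real.sinh y := by
      rcases abs_choice s with h | h <;> simp [y, h, Real.sinh_neg, neg_div_neg_eq]
    rw [norm_Gamma_one_add_mul_I_sq (abs_pos.mp (by linarith)), heven,
      div_le_iff₀ (Real.sinh_pos_iff.mpr (by linarith)),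
      Real.exp_neg]
    calc y = 4 * y * (Real.exp y)⁻¹ * (Real.exp y / 4) := by field_simp
      _ ≤ 4 * y * (Real.exp y)⁻¹ * Real.sinh y := by gcongr
  refine (pow_le_pow_iff_left₀ (norm_nonneg _) (by positivity) two_ne_zero).mp (hsq.trans ?_)
  have hexp : Real.exp (-y) = Real.exp (-(π / 2 * |s|)) ^ 2 := by
    rw [← Real.exp_nat_mul]; simp only [y]; ring_nf
  rw [hexp, mul_pow]
  gcongr
  nlinarith [Real.pi_lt_four, abs_nonneg s]

lemma isBigO_Gamma_vertical_pow (a : ℝ) : ∃ N : ℕ,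
    (fun s : ℝ => Gamma (a + s * I)) =O[cocompact ℝ]
      fun s => (1 + |s|) ^ N * Real.exp (-(π / 2 * |s|)) := by
  obtain ⟨n, hn⟩ := exists_nat_gt (-a)
  obtain ⟨m, hm⟩ := exists_nat_gt (a + n)
  obtain ⟨C, hC⟩ := exists_norm_Gamma_le_mul_norm_Gamma_add (a := a + n) (δ := m + 1 - (a + n))
    (by linarith) (by linarith)
  have h_up : (fun s : ℝ => Gamma (a + s * I)) =O[cocompact ℝ]
      fun s => Gamma ((a + n : ℝ) + s * I) :=
    IsBigO.of_bound 1 <| eventually_one_le_abs_cocompact.mono fun s hs => by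
      simpa [add_right_comm] using norm_Gamma_le_norm_Gamma_add_nat (w := a + s * I) (by simpa) n
  have h_beta : (fun s : ℝ => Gamma ((a + n : ℝ) + s * I)) =O[cocompact ℝ]
      fun s => Gamma ((1 + s * I) + m) :=
    IsBigO.of_bound C <| Eventually.of_forall fun s => by
      convert hC s using 4; push_cast; ring
  have h_down : (fun s : ℝ => Gamma ((1 + s * I) + m)) =O[cocompact ℝ]
      fun s => (1 + |s|) ^ m * ‖Gamma (1 + s * I)‖ :=
    IsBigO.of_bound ((m + 1) ^ m) <| eventually_one_le_abs_cocompact.mono fun s hs => by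
      have hw : (1 + s * I).im ≠ 0 := by simpa using abs_pos.mp (by linarith)
      have h1 : ‖1 + (s : ℂ) * I‖ ≤ 1 + |s| := (norm_add_le _ _).trans (by simp)
      refine (norm_Gamma_add_nat_le hw m).trans ?_
      rw [Real.norm_of_nonneg (by positivity), ← mul_assoc, ← mul_pow]
      gcongr
      nlinarith [abs_nonneg s]
  have h_one : (fun s : ℝ => Gamma (1 + s * I)) =O[cocompact ℝ]
      fun s => (1 + |s|) * Real.exp (-(π / 2 * |s|)) :=
    IsBigO.of_bound 4 <| eventually_one_le_abs_cocompact.mono fun s hs => by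
      rw [Real.norm_of_nonneg (by positivity), ← mul_assoc]
      exact norm_Gamma_one_add_mul_I_le hs
  refine ⟨m + 1, ?_⟩
  exact (h_up.trans <| h_beta.trans <| h_down.trans <| (isBigO_refl _ _).mul h_one.norm_left)
    |>.congr_right fun s => by ring

lemma isBigO_Gamma_vertical (a : ℝ) {ε : ℝ} (hε : 0 < ε) :
    (fun s : ℝ => Gamma (a + s * I)) =O[cocompact ℝ] fun s => Real.exp ((ε - π / 2) * |s|) := by
  obtain ⟨N, h⟩ := isBigO_Gamma_vertical_pow a
  refine (h.trans ((isBigO_one_add_abs_pow_exp N hε).mul (isBigO_refl _ _))).congr_right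
    fun s => ?_
  rw [← Real.exp_add]; ring_nf

lemma norm_sin_le_exp_abs_im (z : ℂ) : ‖sin z‖ ≤ Real.exp |z.im| := by
  have h1 : Real.exp z.im ≤ Real.exp |z.im| := Real.exp_le_exp.mpr (le_abs_self _)
  have h2 : Real.exp (-z.im) ≤ Real.exp |z.im| := Real.exp_le_exp.mpr (neg_le_abs _)
  rw [sin]
  calc ‖(exp (-z * I) - exp (z * I)) * I / 2‖ ≤ (‖exp (-z * I)‖ + ‖exp (z * I)‖) / 2 := by
        rw [norm_div, norm_mul, norm_I, mul_one, Complex.norm_ofNat]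
        gcongr
        exact norm_sub_le _ _
    _ ≤ Real.exp |z.im| := by
        simp only [norm_exp, neg_mul, neg_re, mul_re, I_re, mul_zero, I_im, mul_one, zero_sub,
          neg_neg]
        linarith

lemma inv_Gamma_eq_Gamma_one_sub_mul_sin {z : ℂ} (hz : z.im ≠ 0) :
    (Gamma z)⁻¹ = Gamma (1 - z) * sin (π * z) / π := by
  have hpole : ∀ w : ℂ, w.im ≠ 0 → Gamma w ≠ 0 :=
    fun w hw => Gamma_ne_zero fun m h => hw (by simp [h])
  have hΓ := hpole z hz
  have hΓ' := hpole (1 - z) (by simpa using hz)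
  have hrefl := Gamma_mul_Gamma_one_sub z
  have hsin : sin (π * z) ≠ 0 := fun h => by simp [h, hΓ, hΓ'] at hrefl
  field_simp
  rw [hrefl]
  field_simp

lemma isBigO_inv_Gamma_vertical (a : ℝ) {ε : ℝ} (hε : 0 < ε) :
    (fun s : ℝ => (Gamma (a + s * I))⁻¹) =O[cocompact ℝ]
      fun s => Real.exp ((π / 2 + ε) * |s|) := by
  have hΓ := (isBigO_Gamma_vertical (1 - a) hε).comp_tendsto
    (Homeomorph.neg ℝ).isClosedEmbedding.tendsto_cocompact
  have hsin : (fun s : ℝ => sin (π * (a + s * I))) =O[cocompact ℝ]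
      fun s => Real.exp (π * |s|) :=
    IsBigO.of_bound 1 <| Eventually.of_forall fun s => by
      simpa [abs_mul, abs_of_pos Real.pi_pos] using norm_sin_le_exp_abs_im (π * (a + s * I))
  refine ((hΓ.mul hsin).const_mul_left (π : ℂ)⁻¹).congr' ?_ (Eventually.of_forall fun s => ?_)
  · filter_upwards [eventually_one_le_abs_cocompact] with s hs
    rw [inv_Gamma_eq_Gamma_one_sub_mul_sin (by simpa using abs_pos.mp (by linarith))]
    simp only [Function.comp, Homeomorph.coe_neg]
    push_cast
    ring_nf
  · simp only [Function.comp, Homeomorph.coe_neg, abs_neg, ← Real.exp_add]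
    ring_nf

lemma isBigO_Gamma_vertical_mul (a : ℝ) {b ε : ℝ} (hb : b ≠ 0) (hε : 0 < ε) :
    (fun t : ℝ => Gamma (a + (b * t : ℝ) * I)) =O[cocompact ℝ]
      fun t => Real.exp ((ε - π / 2) * |b| * |t|) :=
  ((isBigO_Gamma_vertical a hε).comp_tendsto (tendsto_cocompact_mul_left₀ hb)).congr_right
    fun t => by simp [abs_mul, mul_assoc]

lemma isBigO_inv_Gamma_vertical_mul (a : ℝ) {b ε : ℝ} (hb : b ≠ 0) (hε : 0 < ε) :
    (fun t : ℝ => (Gamma (a + (b * t : ℝ) * I))⁻¹) =O[cocompact ℝ]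
      fun t => Real.exp ((π / 2 + ε) * |b| * |t|) :=
  ((isBigO_inv_Gamma_vertical a hε).comp_tendsto (tendsto_cocompact_mul_left₀ hb)).congr_right
    fun t => by simp [abs_mul, mul_assoc]

lemma continuous_Gamma_comp {f : ℝ → ℂ} (hf : Continuous f) (hre : ∀ t, 0 < (f t).re) :
    Continuous fun t => Gamma (f t) :=
  continuous_iff_continuousAt.mpr fun t =>
    ((differentiableAt_Gamma _ fun m h => by
      have := hre t
      simp only [h, neg_re, natCast_re, Left.neg_pos_iff] at this
      exact (Nat.cast_nonneg m).not_gt this).continuousAt).comp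
      hf.continuousAt

end Complex

section MellinBarnes

variable {d : ℕ} {α β γ σ ℓ : ℝ}

lemma HFun_add_one (z : ℂ) :
    HFun d α β γ (σ + 1) z = (α * z - σ) * HFun d α β γ σ z := by
  have harg : 1 - ((σ + 1 : ℝ) : ℂ) + α * z = α * z - σ := by push_cast; ring
  rw [HFun, HFun, harg, show 1 - (σ : ℂ) + α * z = (α * z - σ) + 1 by ring]
  -- at `αz = σ` both sides vanish, as `Complex.Gamma 0 = 0`
  rcases eq_or_ne (α * z - σ : ℂ) 0 with h | h
  · simp [h]
  · rw [Gamma_add_one _ h, mul_div_assoc', mul_left_comm _ (α * z - σ : ℂ),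
      mul_div_mul_left _ _ h]

lemma mellinKernel_add_one (r t : ℝ) :
    mellinKernel d α β γ (σ + 1) ℓ r t
      = (α * (ℓ + t * I) - σ) * mellinKernel d α β γ σ ℓ r t := by
  rw [mellinKernel, mellinKernel, HFun_add_one, mul_assoc]

lemma continuous_HFun_line (hA : 0 < (d : ℝ) / 2 + γ + β * ℓ) (hℓ : -1 < ℓ) (hℓ' : ℓ < 0) :
    Continuous fun t : ℝ => HFun d α β γ σ (ℓ + t * I) := by
  simp only [HFun, div_eq_mul_inv, mul_inv]
  have hinv := differentiable_one_div_Gamma.continuous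
  exact (((continuous_Gamma_comp (by fun_prop) fun t => by simpa [div_eq_mul_inv] using hA).mul
    (continuous_Gamma_comp (by fun_prop) fun t => by simpa [neg_lt_iff_pos_add'] using hℓ)).mul
    (continuous_Gamma_comp (by fun_prop) fun t => by simpa using hℓ')).mul
    ((hinv.comp (by fun_prop)).mul (hinv.comp (by fun_prop)))

lemma isBigO_HFun_line (hα : 0 < α) (hβ : 0 < β) {ε : ℝ} (hε : 0 < ε) :
    (fun t : ℝ => HFun d α β γ σ (ℓ + t * I)) =O[cocompact ℝ]
      fun t => Real.exp ((ε * (2 * β + 2 + α) - π * (2 - α) / 2) * |t|) := by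
  have h1 := isBigO_Gamma_vertical_mul ((d : ℝ) / 2 + γ + β * ℓ) hβ.ne' hε
  have h2 := isBigO_Gamma_vertical_mul (1 + ℓ) one_ne_zero hε
  have h3 := isBigO_Gamma_vertical_mul (-ℓ) (neg_ne_zero.mpr one_ne_zero) hε
  have h4 := isBigO_inv_Gamma_vertical_mul (-γ - β * ℓ) (neg_ne_zero.mpr hβ.ne') hε
  have h5 := isBigO_inv_Gamma_vertical_mul (1 - σ + α * ℓ) hα.ne' hε
  refine ((((h1.mul h2).mul h3).mul h4).mul h5).congr (fun t => ?_) (fun t => ?_)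
  · simp only [HFun, div_eq_mul_inv, mul_inv]
    push_cast
    ring_nf
  · simp only [← Real.exp_add, abs_neg, abs_one, abs_of_pos hα, abs_of_pos hβ]
    ring_nf

lemma integrable_HFun_line (hα : 0 < α) (hα2 : α < 2) (hβ : 0 < β)
    (hA : 0 < (d : ℝ) / 2 + γ + β * ℓ) (hℓ : -1 < ℓ) (hℓ' : ℓ < 0) :
    Integrable fun t : ℝ => HFun d α β γ σ (ℓ + t * I) := by
  have hε : 0 < π * (2 - α) / (4 * (2 * β + 2 + α)) := by
    have := Real.pi_pos
    apply div_pos <;> nlinarith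
  refine (continuous_HFun_line hA hℓ hℓ').locallyIntegrable.integrable_of_isBigO_cocompact
    (isBigO_HFun_line hα hβ hε) ((integrable_exp_mul_abs ?_).integrableAtFilter _)
  field_simp
  nlinarith [Real.pi_pos]

lemma norm_mellinKernel (r t : ℝ) :
    ‖mellinKernel d α β γ σ ℓ r t‖ = ‖HFun d α β γ σ (ℓ + t * I)‖ * Real.exp (-ℓ * Real.log r) := by
  rw [mellinKernel, norm_mul, norm_exp]
  simp

lemma integrable_mellinKernel (hH : Integrable fun t : ℝ => HFun d α β γ σ (ℓ + t * I)) (r : ℝ) :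
    Integrable (mellinKernel d α β γ σ ℓ r) :=
  (hH.norm.mul_const _).mono' (hH.aestronglyMeasurable.mul (by fun_prop))
    (ae_of_all _ fun t => (norm_mellinKernel r t).le)

lemma ofReal_rpow_mul_mellinKernel {c s : ℝ} (hc : 0 < c) (hs : 0 < s) (t : ℝ) :
    ((s ^ (-σ) : ℝ) : ℂ) * mellinKernel d α β γ σ ℓ (c * s ^ (-α)) t
      = mellinKernel d α β γ σ ℓ c t * (s : ℂ) ^ (α * (ℓ + t * I) - σ) := by
  rw [mellinKernel, mellinKernel, Real.log_mul hc.ne' (by positivity), Real.log_rpow hs,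
    ofReal_cpow hs.le, cpow_def_of_ne_zero (by exact_mod_cast hs.ne'), cpow_def_of_ne_zero
    (by exact_mod_cast hs.ne'), ← ofReal_log hs.le, mul_left_comm, mul_assoc, ← exp_add,
    ← exp_add]
  congr 2
  push_cast
  ring

lemma hasDerivAt_mellinKernel_mul_cpow (c t : ℝ) {s : ℝ} (hs : 0 < s) :
    HasDerivAt (fun s : ℝ => mellinKernel d α β γ σ ℓ c t * (s : ℂ) ^ (α * (ℓ + t * I) - σ))
      (mellinKernel d α β γ (σ + 1) ℓ c t * (s : ℂ) ^ (α * (ℓ + t * I) - (σ + 1 : ℝ))) s := by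
  have h := ((hasDerivAt_id (s : ℂ)).cpow_const (c := α * (ℓ + t * I) - σ)
    (ofReal_mem_slitPlane.mpr hs)).comp_ofReal.const_mul (mellinKernel d α β γ σ ℓ c t)
  refine h.congr_deriv ?_
  rw [mellinKernel_add_one, id, mul_one, sub_sub, ofReal_add, ofReal_one]
  ring

lemma norm_mellinKernel_mul_cpow (c t : ℝ) {s : ℝ} (hs : 0 < s) :
    ‖mellinKernel d α β γ σ ℓ c t * (s : ℂ) ^ (α * (ℓ + t * I) - σ)‖
      = ‖mellinKernel d α β γ σ ℓ c t‖ * s ^ (α * ℓ - σ) := by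
  rw [norm_mul, norm_cpow_eq_rpow_re_of_pos hs]
  simp

lemma integrable_mellinKernel_mul_cpow {c s : ℝ} (h : Integrable (mellinKernel d α β γ σ ℓ c))
    (hs : 0 < s) :
    Integrable fun t : ℝ => mellinKernel d α β γ σ ℓ c t * (s : ℂ) ^ (α * (ℓ + t * I) - σ) :=
  (h.norm.mul_const _).mono'
    (h.aestronglyMeasurable.mul (Continuous.const_cpow (by fun_prop)
      (Or.inl (by exact_mod_cast hs.ne'))).aestronglyMeasurable)
    (ae_of_all _ fun t => (norm_mellinKernel_mul_cpow c t hs).le)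

lemma hasDerivAt_integral_mellinKernel_mul_cpow {c s₀ : ℝ}
    (hσ : Integrable (mellinKernel d α β γ σ ℓ c))
    (hσ1 : Integrable (mellinKernel d α β γ (σ + 1) ℓ c)) (hs₀ : 0 < s₀) :
    HasDerivAt (fun s : ℝ => ∫ t, mellinKernel d α β γ σ ℓ c t * (s : ℂ) ^ (α * (ℓ + t * I) - σ))
      (∫ t, mellinKernel d α β γ (σ + 1) ℓ c t * (s₀ : ℂ) ^ (α * (ℓ + t * I) - (σ + 1 : ℝ)))
      s₀ := by
  obtain ⟨M, hM⟩ := isCompact_Icc.exists_bound_of_continuousOn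
    ((continuousOn_id (s := Set.Icc (s₀ / 2) (2 * s₀))).rpow_const (p := α * ℓ - (σ + 1))
      fun s hs => Or.inl (by simp only [id]; linarith [hs.1]))
  refine (hasDerivAt_integral_of_dominated_loc_of_deriv_le
    (bound := fun t => ‖mellinKernel d α β γ (σ + 1) ℓ c t‖ * M)
    (Ioo_mem_nhds (by linarith : s₀ / 2 < s₀) (by linarith : s₀ < 2 * s₀))
    ((eventually_gt_nhds hs₀).mono fun s hs =>
      (integrable_mellinKernel_mul_cpow hσ hs).aestronglyMeasurable)
    (integrable_mellinKernel_mul_cpow hσ hs₀)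
    (integrable_mellinKernel_mul_cpow hσ1 hs₀).aestronglyMeasurable
    (ae_of_all _ fun t s hs => ?_) (hσ1.norm.mul_const M)
    (ae_of_all _ fun t s hs => hasDerivAt_mellinKernel_mul_cpow c t (by linarith [hs.1]))).2
  rw [norm_mellinKernel_mul_cpow c t (by linarith [hs.1])]
  gcongr
  exact (le_abs_self _).trans (hM s (Set.Ioo_subset_Icc_self hs))

lemma pFun_eq_integral_mellinKernel_mul_cpow {x : EuclideanSpace ℝ (Fin d)} (hx : x ≠ 0) {s : ℝ}
    (hs : 0 < s) :
    pFun d α β γ σ ℓ s x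
      = (((2 : ℝ) ^ (2 * γ) * π ^ (-(d : ℝ) / 2) * ‖x‖ ^ (-(d : ℝ) - 2 * γ) / (2 * π) : ℝ) : ℂ) *
        ∫ t, mellinKernel d α β γ σ ℓ ((2 : ℝ) ^ (-(2 * β)) * ‖x‖ ^ (2 * β)) t *
          (s : ℂ) ^ (α * (ℓ + t * I) - σ) := by
  have hc : 0 < (2 : ℝ) ^ (-(2 * β)) * ‖x‖ ^ (2 * β) := by
    have := norm_pos_iff.mpr hx
    positivity
  simp_rw [← ofReal_rpow_mul_mellinKernel hc hs]
  rw [integral_const_mul, pFun, hFun]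
  push_cast
  ring

end MellinBarnes

theorem stmt17_general (d : ℕ) (α β γ σ : ℝ) (hα : 0 < α) (hα2 : α < 2)
    (hβ : 0 < β) (ℓ : ℝ)
    (hℓ1 : max (-1 : ℝ) (-((d : ℝ) + 2 * γ) / (2 * β)) < ℓ) (hℓ2 : ℓ < 0) :
    ∀ (x : EuclideanSpace ℝ (Fin d)), x ≠ 0 → ∀ t : ℝ, 0 < t →
      HasDerivAt (fun s : ℝ => pFun d α β γ σ ℓ s x) (pFun d α β γ (σ + 1) ℓ t x) t := by
  intro x hx t ht
  obtain ⟨hℓ, hℓA⟩ := max_lt_iff.mp hℓ1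
  have hA : 0 < (d : ℝ) / 2 + γ + β * ℓ := by
    rw [div_lt_iff₀ (by positivity)] at hℓA
    linarith
  have hint : ∀ σ', Integrable (mellinKernel d α β γ σ' ℓ ((2 : ℝ) ^ (-(2 * β)) * ‖x‖ ^ (2 * β))) :=
    fun σ' => integrable_mellinKernel (integrable_HFun_line hα hα2 hβ hA hℓ hℓ2) _
  rw [pFun_eq_integral_mellinKernel_mul_cpow hx ht]
  exact ((hasDerivAt_integral_mellinKernel_mul_cpow (hint σ) (hint (σ + 1)) ht).const_mul _)
    |>.congr_of_eventuallyEq ((eventually_gt_nhds ht).mono fun s hs =>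
      pFun_eq_integral_mellinKernel_mul_cpow hx hs)

/-- for every `x ≠ 0` and every `t > 0`, the map `s ↦ p_{σ,γ}(s,x)` is
differentiable at `t` with derivative `p_{σ+1,γ}(t,x)`. -/
theorem stmt17 (d : ℕ) (hd : 1 ≤ d) (α β γ σ : ℝ) (hα : 0 < α) (hα2 : α < 2)
    (hβ : 0 < β) (hγ : 0 ≤ γ) (ℓ : ℝ)
    (hℓ1 : max (-1 : ℝ) (-((d : ℝ) + 2 * γ) / (2 * β)) < ℓ) (hℓ2 : ℓ < 0) :
    ∀ (x : EuclideanSpace ℝ (Fin d)), x ≠ 0 → ∀ t : ℝ, 0 < t →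
      HasDerivAt (fun s : ℝ => pFun d α β γ σ ℓ s x) (pFun d α β γ (σ + 1) ℓ t x) t :=
  stmt17_general d α β γ σ hα hα2 hβ ℓ hℓ1 hℓ2
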